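/- The binary entropy H(p) = -p·log₂ p - (1-p)·log₂(1-p) composed with p(δ) = (1 + sqrt(cos²(2η) + sin²δ·sin²(2η)))/2 is monotonically decreasing in δ on (0, π/2): the entanglement E(δ) = H(p(δ)) satisfies E'(δ) ≤ 0 for δ ∈ (0, π/2). -/
import Mathlib


open Real Set

/-- Binary entropy in bits, with the convention `0 · log₂ 0 = 0`
(automatic since `Real.logb 2 0 = 0`). -/
noncomputable def binEnt (p : ℝ) : ℝ := -(p * Real.logb 2 p) - (1 - p) * Real.logb 2 (1 - p)

/-- Boosted-frame entanglement for the equal-helicity state. -/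
noncomputable def Eent (η δ : ℝ) : ℝ :=
  binEnt ((1 + Real.sqrt (Real.cos (2*η)^2 + Real.sin δ ^2 * Real.sin (2*η)^2)) / 2)

lemma binEnt_eq (p : ℝ) : binEnt p = Real.binEntropy p / Real.log 2 := by
  simp [binEnt, Real.binEntropy, Real.logb, Real.log_inv]
  ring

lemma binEnt_antitoneOn : AntitoneOn binEnt (Icc (2⁻¹ : ℝ) 1) := by
  intro a ha b hb hab
  rw [binEnt_eq, binEnt_eq]
  have h : Real.binEntropy b ≤ Real.binEntropy a :=
    Real.binEntropy_strictAntiOn.antitoneOn ha hb hab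
  exact div_le_div_of_nonneg_right h (Real.log_pos one_lt_two).le |>.trans_eq rfl

theorem stmt_6 (η : ℝ) : AntitoneOn (fun δ => Eent η δ) (Icc 0 (π/2)) := by
  intro a ha b hb hab
  simp only [Eent]
  set c := Real.cos (2*η)^2
  set s := Real.sin (2*η)^2
  have hcs : c + s = 1 := Real.cos_sq_add_sin_sq (2*η)
  have hs : 0 ≤ s := sq_nonneg _
  have hc : 0 ≤ c := sq_nonneg _
  have key : ∀ x : ℝ, x ∈ Icc 0 (π/2) →
      (1 + Real.sqrt (c + Real.sin x ^2 * s)) / 2 ∈ Icc (2⁻¹ : ℝ) 1 := by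
    intro x hx
    constructor
    · have := Real.sqrt_nonneg (c + Real.sin x ^2 * s)
      linarith
    · have h1 : c + Real.sin x ^2 * s ≤ 1 := by
        have : Real.sin x ^2 ≤ 1 := Real.sin_sq_le_one x
        nlinarith
      have := Real.sqrt_le_one.mpr h1
      linarith
  apply binEnt_antitoneOn (key a ha) (key b hb)
  have hmono : Real.sin a ^ 2 ≤ Real.sin b ^ 2 := by
    have h1 : Real.sin a ≤ Real.sin b := by
      apply Real.sin_le_sin_of_le_of_le_pi_div_two _ hb.2 hab
      linarith [ha.1, Real.pi_pos]
    have h2 : 0 ≤ Real.sin a := Real.sin_nonneg_of_nonneg_of_le_pi ha.1 (by linarith [ha.2, Real.pi_pos])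
    nlinarith
  have := Real.sqrt_le_sqrt (by nlinarith : c + Real.sin a ^2 * s ≤ c + Real.sin b ^2 * s)
  linarith
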